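/- arXiv:1212.5960 — 5 statements merged into one kernel-verified Lean document; each statement's English description precedes it below -/
import Mathlib

section
/- Let G be a factorizable graph, X an odd-maximal barrier of G with odd components K_1, …, K_l of G − X (l = |X|), M a perfect matching of G, and M' = M ∩ δ(X) the corresponding perfect matching of H_X(G). Let u, v ∈ X, let K be an odd component of G − X with w ∈ V(K), and let w_K be the contracted vertex of H_X(G) corresponding to K. Then for any M-balanced path P of G from u to v, the path P' = P/K_1/⋯/K_l obtained from P by contracting each K_i is an M'-balanced path of H_X(G) from u to v; and for any M-saturated path P of G between u and w, the contracted path P' is an M'-saturated path of H_X(G) between u and w_K. -/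
open SimpleGraph

section Defs

variable {V : Type*} {W : Type*}

/-- A graph is factorizable if it has a perfect matching. -/
def Factorizable (G : SimpleGraph V) : Prop :=
  ∃ M : SimpleGraph.Subgraph G, M.IsPerfectMatching

/-- An edge is allowed if some perfect matching contains it. -/
def Allowed (G : SimpleGraph V) (e : Sym2 V) : Prop :=
  ∃ M : SimpleGraph.Subgraph G, M.IsPerfectMatching ∧ e ∈ M.edgeSet

/-- The spanning subgraph formed by the allowed edges. -/
def allowedSubgraph (G : SimpleGraph V) : SimpleGraph V :=
  SimpleGraph.fromEdgeSet {e | e ∈ G.edgeSet ∧ Allowed G e}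

/-- `u` and `v` lie in the same factor-component of `G`. -/
def SameFC (G : SimpleGraph V) (u v : V) : Prop :=
  (allowedSubgraph G).Reachable u v

/-- `C` is the vertex set of a factor-component of `G`. -/
def IsFactorComponent (G : SimpleGraph V) (C : Set V) : Prop :=
  ∃ v : V, C = {w | SameFC G v w}

/-- Edges alternate along a list: the `i`-th edge lies in `F` iff `i` is even. -/
def IsAltList (F : Set (Sym2 V)) (l : List (Sym2 V)) : Prop :=
  ∀ (i : ℕ) (h : i < l.length), (l.get ⟨i, h⟩ ∈ F ↔ Even i)

/-- An `M`-saturated path: odd length, `M ∩ E(P)` a perfect matching of `P`. -/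
def IsSaturatedPath {G : SimpleGraph V} (F : Set (Sym2 V)) {u v : V}
    (p : G.Walk u v) : Prop :=
  p.IsPath ∧ Odd p.length ∧ IsAltList F p.edges

/-- An `M`-balanced path from `u` to `v`: even length, `M ∩ E(P)` a near-perfect
matching of `P` exposing only `v`. -/
def IsBalancedPath {G : SimpleGraph V} (F : Set (Sym2 V)) {u v : V}
    (p : G.Walk u v) : Prop :=
  p.IsPath ∧ Even p.length ∧ IsAltList F p.edges

/-- The number of odd components of `G - X`. -/
noncomputable def qG (G : SimpleGraph V) (X : Set V) : ℕ :=
  {c : (G.induce Xᶜ).ConnectedComponent | Odd c.supp.ncard}.ncard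

/-- The set of vertices contained in odd components of `G - X`. -/
def DX (G : SimpleGraph V) (X : Set V) : Set V :=
  {v | ∃ h : v ∈ Xᶜ, Odd ((G.induce Xᶜ).connectedComponentMk ⟨v, h⟩).supp.ncard}

/-- The set of vertices contained in even components of `G - X`. -/
def CX (G : SimpleGraph V) (X : Set V) : Set V := (X ∪ DX G X)ᶜ

/-- A barrier of a factorizable graph: `q_G(X) = |X|`. -/
def IsBarrier (G : SimpleGraph V) (X : Set V) : Prop := qG G X = X.ncard

/-- An odd-maximal barrier: no nonempty `Y ⊆ D_X` with `X ∪ Y` a barrier. -/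
def IsOddMaximalBarrier (G : SimpleGraph V) (X : Set V) : Prop :=
  IsBarrier G X ∧ ∀ Y ⊆ DX G X, Y.Nonempty → ¬ IsBarrier G (X ∪ Y)

/-- Kita's equivalence relation `u ∼_G v`. -/
def simG (G : SimpleGraph V) (u v : V) : Prop :=
  SameFC G u v ∧ (u = v ∨ ¬ Factorizable (G.induce {w : V | w ≠ u ∧ w ≠ v}))

/-- `S` is a class of the generalized canonical partition `P(G)`. -/
def IsCanonicalClass (G : SimpleGraph V) (S : Set V) : Prop :=
  ∃ v : V, S = {u | simG G u v}

/-- `S` is a member of `P_G(H)` where `C = V(H)`. -/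
def IsClassOf (G : SimpleGraph V) (C S : Set V) : Prop :=
  IsCanonicalClass G S ∧ S ⊆ C

/-- A separating set meets each factor-component fully or not at all. -/
def IsSeparating (G : SimpleGraph V) (X : Set V) : Prop :=
  ∀ C : Set V, IsFactorComponent G C → C ⊆ X ∨ Disjoint C X

/-- Factor-critical: deleting any vertex leaves a factorizable (or empty) graph. -/
def FactorCritical (H : SimpleGraph W) : Prop :=
  ∀ v : W, Factorizable (H.induce {w : W | w ≠ v})

/-- The graph `G[X]/C`: induced on `X`, with `C` contracted to a single
vertex (`none`). -/
def contractSet (G : SimpleGraph V) (X C : Set V) :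
    SimpleGraph (Option {x : V // x ∈ X \ C}) :=
  SimpleGraph.fromRel (fun a b =>
    match a, b with
    | some x, some y => G.Adj x.1 y.1
    | some x, none => ∃ c ∈ C ∩ X, G.Adj x.1 c
    | none, _ => False)

/-- `X` is a critical-inducing set for the factor-component `C1` to `C2`. -/
def CriticalInducing (G : SimpleGraph V) (C1 C2 X : Set V) : Prop :=
  IsSeparating G X ∧ C1 ∪ C2 ⊆ X ∧ FactorCritical (contractSet G X C1)

/-- Kita's partial order `C1 ◁ C2` on factor-components. -/
def compOrder (G : SimpleGraph V) (C1 C2 : Set V) : Prop :=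
  ∃ X : Set V, CriticalInducing G C1 C2 X

/-- `V↑*(H)`: union of the vertex sets of all factor-components above `C`. -/
def upStar (G : SimpleGraph V) (C : Set V) : Set V :=
  {v | ∃ C' : Set V, IsFactorComponent G C' ∧ compOrder G C C' ∧ v ∈ C'}

/-- `K` is (the vertex set of) a connected component of `G[U]`. -/
def IsComponentOf (G : SimpleGraph V) (U K : Set V) : Prop :=
  ∃ (v : V) (hv : v ∈ U),
    K = {w | ∃ hw : w ∈ U, (G.induce U).Reachable ⟨v, hv⟩ ⟨w, hw⟩}

/-- `V↑(S)` for a class `S ∈ P_G(H)` where `C = V(H)`. -/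
def upOfClass (G : SimpleGraph V) (C S : Set V) : Set V :=
  {v | ∃ C' : Set V, IsFactorComponent G C' ∧ C' ≠ C ∧ compOrder G C C' ∧ v ∈ C' ∧
    ∃ K : Set V, IsComponentOf G (upStar G C \ C) K ∧ C' ⊆ K ∧
      ∀ w ∈ C, (∃ k ∈ K, G.Adj k w) → w ∈ S}

/-- `V↑*(S) = V↑(S) ∪ S`. -/
def upStarOfClass (G : SimpleGraph V) (C S : Set V) : Set V := upOfClass G C S ∪ S

/-- The odd components of `G - X`, as a type. -/
abbrev OddCompT (G : SimpleGraph V) (X : Set V) :=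
  {c : (G.induce Xᶜ).ConnectedComponent // Odd c.supp.ncard}

/-- Vertices of `H_X(G)`: vertices of `X` together with contracted odd components. -/
abbrev HVert (G : SimpleGraph V) (X : Set V) := {x : V // x ∈ X} ⊕ OddCompT G X

/-- The bipartite graph `H_X(G)`. -/
def HGraph (G : SimpleGraph V) (X : Set V) : SimpleGraph (HVert G X) :=
  SimpleGraph.fromRel (fun a b =>
    ∃ (x : {x : V // x ∈ X}) (c : OddCompT G X) (y : (Xᶜ : Set V)),
      a = Sum.inl x ∧ b = Sum.inr c ∧
      (G.induce Xᶜ).connectedComponentMk y = c.1 ∧ G.Adj x.1 y.1)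

/-- The edge set of `H_X(G)` corresponding to `M ∩ δ(X)`. -/
def projEdges (G : SimpleGraph V) (X : Set V) (M : SimpleGraph.Subgraph G) :
    Set (Sym2 (HVert G X)) :=
  {e | ∃ (x : {x : V // x ∈ X}) (c : OddCompT G X) (y : (Xᶜ : Set V)),
    (G.induce Xᶜ).connectedComponentMk y = c.1 ∧ s(x.1, y.1) ∈ M.edgeSet ∧
    e = s(Sum.inl x, Sum.inr c)}

/-- The projection of a vertex of `G` to `H_X(G)` (`none` on `C_X`). -/
noncomputable def projV (G : SimpleGraph V) (X : Set V) (v : V) :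
    Option (HVert G X) := by
  classical
  exact if h : v ∈ X then some (Sum.inl ⟨v, h⟩)
  else if ho : Odd ((G.induce Xᶜ).connectedComponentMk ⟨v, h⟩).supp.ncard then
    some (Sum.inr ⟨(G.induce Xᶜ).connectedComponentMk ⟨v, h⟩, ho⟩)
  else none

/-- The support of the contraction `P/K_1/⋯/K_l` of a path of `G` to `H_X(G)`. -/
noncomputable def contractSupport (G : SimpleGraph V) (X : Set V) (l : List V) :
    List (HVert G X) := by
  classical
  exact List.destutter (· ≠ ·) ((l.map (projV G X)).reduceOption)

/-- One step of the Dulmage–Mendelsohn relation with respect to the color class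
`A`: some edge joins `B ∩ V(c)` to `A ∩ V(d)`. -/
def dmStep (H : SimpleGraph W) (A : Set W)
    (c d : (allowedSubgraph H).ConnectedComponent) : Prop :=
  ∃ b a : W, b ∉ A ∧ a ∈ A ∧ b ∈ c.supp ∧ a ∈ d.supp ∧ H.Adj b a

/-- The Dulmage–Mendelsohn order `⪯` with respect to `A`. -/
def dmLE (H : SimpleGraph W) (A : Set W) :
    (allowedSubgraph H).ConnectedComponent →
      (allowedSubgraph H).ConnectedComponent → Prop :=
  Relation.ReflTransGen (dmStep H A)

/-- The vertex set of the expansion of a DM-component `c` of `H_X(G)`. -/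
def expansionVerts (G : SimpleGraph V) (X : Set V)
    (c : (allowedSubgraph (HGraph G X)).ConnectedComponent) : Set V :=
  {v | (∃ h : v ∈ X, Sum.inl ⟨v, h⟩ ∈ c.supp) ∨
       (∃ (h : v ∈ Xᶜ) (ho : Odd ((G.induce Xᶜ).connectedComponentMk ⟨v, h⟩).supp.ncard),
         Sum.inr ⟨(G.induce Xᶜ).connectedComponentMk ⟨v, h⟩, ho⟩ ∈ c.supp)}

/-- A set of edges forms a perfect matching of `H`. -/
def IsPerfectMatchingSet (H : SimpleGraph W) (F : Set (Sym2 W)) : Prop :=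
  F ⊆ H.edgeSet ∧ ∀ w : W, ∃! e : Sym2 W, e ∈ F ∧ w ∈ e

/-- The graph `P − E(H)`: the edges of the path `p` that are not edges of the
induced subgraph `G[C]`. -/
def earGraph (G : SimpleGraph V) (C : Set V) {u v : V} (p : G.Walk u v) :
    SimpleGraph V :=
  SimpleGraph.fromEdgeSet {e | e ∈ p.edges ∧ ¬ ∀ z ∈ e, z ∈ C}

/-- `K` is a connected component of `Q` containing at least one edge. -/
def IsEdgeComponentOf (Q : SimpleGraph V) (K : Set V) : Prop :=
  ∃ a b : V, Q.Adj a b ∧ K = {w | Q.Reachable a w}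

/-- The end vertices of a path-component `K` of `Q` (vertices of degree `≤ 1`). -/
def pathEnds (Q : SimpleGraph V) (K : Set V) : Set V :=
  {z ∈ K | ¬ ∃ w₁ w₂ : V, w₁ ≠ w₂ ∧ Q.Adj z w₁ ∧ Q.Adj z w₂}

/-- The maximum size of a matching of `G`. -/
noncomputable def matchNum (G : SimpleGraph V) : ℕ :=
  sSup {n : ℕ | ∃ M : SimpleGraph.Subgraph G, M.IsMatching ∧ M.edgeSet.ncard = n}

/-- A barrier of a general graph, via the Berge formula. -/
def IsBarrierGen [Fintype V] (G : SimpleGraph V) (X : Set V) : Prop :=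
  qG G X = (Fintype.card V - 2 * matchNum G) + X.ncard

/-- An odd-maximal barrier of a general graph. -/
def IsOddMaximalBarrierGen [Fintype V] (G : SimpleGraph V) (X : Set V) : Prop :=
  IsBarrierGen G X ∧ ∀ Y ⊆ DX G X, Y.Nonempty → ¬ IsBarrierGen G (X ∪ Y)

end Defs

/-!
Since `q_G(X) = |X|` and every odd component of `G - X` sends an `M`-edge out of itself, `M`
matches the vertices of `X` into pairwise distinct odd components. So an `M`-alternating path
leaving `X` along an `M`-edge enters a component `K` only through the `M`-edge at the unique
vertex of `K` matched into `X`, leaves `K` along a non-`M` edge back to `X`, and never meets `K`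
again nor any even component. Contracting the components it visits therefore gives an
`M ∩ δ(X)`-alternating path of `H_X(G)`, whose parity is forced by the bipartition of `H_X(G)`.
-/

section Projection

variable {V : Type*} {G : SimpleGraph V} {X : Set V}

theorem isAltList_nil {F : Set (Sym2 V)} : IsAltList F [] :=
  fun _ h => absurd h (Nat.not_lt_zero _)

theorem isAltList_cons {F : Set (Sym2 V)} {e : Sym2 V} {l : List (Sym2 V)} :
    IsAltList F (e :: l) ↔ e ∈ F ∧ IsAltList Fᶜ l := by
  refine ⟨fun h => ⟨by simpa using h 0 (by simp), fun i hi => ?_⟩, fun ⟨he, hl⟩ i hi => ?_⟩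
  · have hi' : l[i] ∈ F ↔ Odd i := by simpa [Nat.even_add_one] using h (i + 1) (by simpa using hi)
    simp [hi']
  · cases i with
    | zero => simpa using he
    | succ i =>
      have hi' := hl i (by simpa using hi)
      simp only [Set.mem_compl_iff] at hi'
      simp [Nat.even_add_one, ← hi']

def InComponent (c : (G.induce Xᶜ).ConnectedComponent) (z : V) : Prop :=
  ∃ hz : z ∈ Xᶜ, (G.induce Xᶜ).connectedComponentMk ⟨z, hz⟩ = c

theorem inComponent_mk {z : V} (hz : z ∈ Xᶜ) :
    InComponent ((G.induce Xᶜ).connectedComponentMk ⟨z, hz⟩) z :=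
  ⟨hz, rfl⟩

theorem InComponent.notMem {c : (G.induce Xᶜ).ConnectedComponent} {z : V}
    (h : InComponent c z) : z ∉ X :=
  h.1

theorem InComponent.eq {c c' : (G.induce Xᶜ).ConnectedComponent} {z : V}
    (h : InComponent c z) (h' : InComponent c' z) : c = c' := by
  obtain ⟨_, rfl⟩ := h
  obtain ⟨_, rfl⟩ := h'
  rfl

theorem InComponent.of_adj {c : (G.induce Xᶜ).ConnectedComponent} {a b : V}
    (ha : InComponent c a) (hb : b ∉ X) (hab : G.Adj a b) : InComponent c b := by
  obtain ⟨ha', rfl⟩ := ha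
  exact ⟨hb, (ConnectedComponent.sound
    (Adj.reachable (show (G.induce Xᶜ).Adj ⟨a, ha'⟩ ⟨b, hb⟩ from hab))).symm⟩

theorem ncard_setOf_inComponent (c : (G.induce Xᶜ).ConnectedComponent) :
    {z | InComponent c z}.ncard = c.supp.ncard := by
  have : {z | InComponent c z} = Subtype.val '' c.supp := by
    ext z
    simp [InComponent, ConnectedComponent.mem_supp_iff]
  rw [this, Set.ncard_image_of_injective _ Subtype.val_injective]

theorem mem_DX_of_inComponent {K : OddCompT G X} {z : V} (h : InComponent K.1 z) :
    z ∈ DX G X := by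
  obtain ⟨hz, hK⟩ := h
  exact ⟨hz, hK ▸ K.2⟩

theorem projV_of_mem {x : V} (hx : x ∈ X) : projV G X x = some (Sum.inl ⟨x, hx⟩) := by
  simp [projV, hx]

theorem projV_of_inComponent {K : OddCompT G X} {z : V} (h : InComponent K.1 z) :
    projV G X z = some (Sum.inr K) := by
  obtain ⟨hz, hK⟩ := h
  have hK' := hK ▸ K.2
  simp only [projV, dif_neg hz, dif_pos hK', Option.some.injEq, Sum.inr.injEq]
  exact Subtype.ext hK

theorem eq_of_projV_eq_inl {x : {x // x ∈ X}} {z : V}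
    (h : projV G X z = some (Sum.inl x)) : z = x := by
  unfold projV at h
  split_ifs at h <;> simp_all [← Subtype.val_inj]

theorem inComponent_of_projV_eq_inr {K : OddCompT G X} {z : V}
    (h : projV G X z = some (Sum.inr K)) : InComponent K.1 z := by
  unfold projV at h
  split_ifs at h with hz hK
  · simp at h
  · exact ⟨hz, by simp_all [← Subtype.val_inj]⟩

theorem mem_contractSupport {l : List V} {e : HVert G X} (h : e ∈ contractSupport G X l) :
    ∃ z ∈ l, projV G X z = some e := by
  classical
  simpa [contractSupport, List.reduceOption_mem_iff] using
    (List.destutter_sublist _ _).mem h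

theorem contractSupport_support_nil {z : V} {e : HVert G X} (h : projV G X z = some e) :
    contractSupport G X (Walk.nil : G.Walk z z).support = [e] := by
  simp [contractSupport, h]

theorem contractSupport_support_cons_of_ne {a b t : V} (hab : G.Adj a b) (q : G.Walk b t)
    {x y : HVert G X} (ha : projV G X a = some x) (hb : projV G X b = some y) (hxy : x ≠ y) :
    contractSupport G X (Walk.cons hab q).support = x :: contractSupport G X q.support := by
  classical
  rw [Walk.support_cons, ← q.cons_tail_support]
  simp only [contractSupport, List.map_cons, ha, hb, List.reduceOption_cons_of_some,
    List.destutter_cons_cons, if_pos hxy]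
  rfl

theorem contractSupport_support_cons_of_eq {a b t : V} (hab : G.Adj a b) (q : G.Walk b t)
    {x : HVert G X} (ha : projV G X a = some x) (hb : projV G X b = some x) :
    contractSupport G X (Walk.cons hab q).support = contractSupport G X q.support := by
  classical
  rw [Walk.support_cons, ← q.cons_tail_support]
  simp only [contractSupport, List.map_cons, ha, hb, List.reduceOption_cons_of_some]
  rw [List.destutter_cons_cons, if_neg (not_not.2 rfl), List.destutter_cons']

theorem HGraph.adj_inl_inr {x : {x // x ∈ X}} {K : OddCompT G X} {y : V}
    (hxy : G.Adj x y) (hy : InComponent K.1 y) : (HGraph G X).Adj (Sum.inl x) (Sum.inr K) := by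
  obtain ⟨hy', hK⟩ := hy
  rw [HGraph, fromRel_adj]
  exact ⟨by simp, Or.inl ⟨x, K, ⟨y, hy'⟩, rfl, rfl, hK, hxy⟩⟩

def HGraph.coloring : (HGraph G X).Coloring Bool :=
  Coloring.mk Sum.isLeft fun {a b} h => by
    rw [HGraph, fromRel_adj] at h
    obtain ⟨-, ⟨x, K, y, rfl, rfl, -⟩ | ⟨x, K, y, rfl, rfl, -⟩⟩ := h <;> simp

@[simp]
theorem HGraph.coloring_apply (a : HVert G X) : HGraph.coloring a = a.isLeft :=
  rfl

theorem mem_projEdges_iff {M : G.Subgraph} {x : {x // x ∈ X}} {K : OddCompT G X} :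
    s(Sum.inl x, Sum.inr K) ∈ projEdges G X M ↔ ∃ y, M.Adj x y ∧ InComponent K.1 y := by
  constructor
  · rintro ⟨x', K', ⟨y, hy⟩, hK, hxy, he⟩
    obtain ⟨rfl, rfl⟩ : x = x' ∧ K = K' := by simpa using he
    exact ⟨y, hxy, hy, hK⟩
  · rintro ⟨y, hxy, hy, hK⟩
    exact ⟨x, K, ⟨y, hy⟩, hK, hxy, rfl⟩

end Projection

section Barrier

variable {V : Type*} {G : SimpleGraph V} {X : Set V} {M : G.Subgraph}

theorem SimpleGraph.Subgraph.IsPerfectMatching.even_ncard_of_adj_mem [Finite V]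
    (hM : M.IsPerfectMatching) {s : Set V} (hs : ∀ ⦃v w⦄, v ∈ s → M.Adj v w → w ∈ s) :
    Even s.ncard := by
  have hmatch : (M.induce s).IsMatching := by
    intro v hv
    obtain ⟨w, hvw, huniq⟩ := hM.1 (hM.2 v)
    exact ⟨w, ⟨hv, hs hv hvw, hvw⟩, fun y hy => huniq y hy.2.2⟩
  have : Fintype (M.induce s).verts := Fintype.ofFinite _
  simpa [Set.ncard_eq_toFinset_card'] using hmatch.even_card

theorem SimpleGraph.Subgraph.IsPerfectMatching.exists_adj_of_odd [Finite V]
    (hM : M.IsPerfectMatching) (K : OddCompT G X) :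
    ∃ z x, InComponent K.1 z ∧ x ∈ X ∧ M.Adj z x := by
  by_contra! h
  refine Nat.not_even_iff_odd.2 K.2 ?_
  rw [← ncard_setOf_inComponent]
  refine hM.even_ncard_of_adj_mem fun v w (hv : InComponent K.1 v) hvw => ?_
  exact hv.of_adj (fun hw => h v w hv hw hvw) (M.adj_sub hvw)

/-- `M ∩ δ(X)` is a matching of `H_X(G)` covering `X`. -/
structure MatchesIntoOddComponents (M : G.Subgraph) (X : Set V) : Prop where
  isMatching : M.IsMatching
  exists_inComponent : ∀ ⦃x y : V⦄, x ∈ X → M.Adj x y → ∃ K : OddCompT G X, InComponent K.1 y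
  eq_of_adj : ∀ ⦃c : (G.induce Xᶜ).ConnectedComponent⦄ ⦃x x' y y' : V⦄, x ∈ X → x' ∈ X →
    M.Adj x y → M.Adj x' y' → InComponent c y → InComponent c y' → y = y'

theorem SimpleGraph.Subgraph.IsPerfectMatching.matchesIntoOddComponents [Finite V]
    (hM : M.IsPerfectMatching) (hX : IsBarrier G X) : MatchesIntoOddComponents M X := by
  choose z x hz hx hzx using fun K : OddCompT G X => hM.exists_adj_of_odd K
  have hinj : Function.Injective fun K => (⟨x K, hx K⟩ : {x // x ∈ X}) := by
    intro K K' h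
    have hxx : x K = x K' := congrArg Subtype.val h
    have hzz : z K = z K' := hM.1.eq_of_adj_right (hzx K) (hxx ▸ hzx K')
    exact Subtype.ext ((hz K).eq (hzz ▸ hz K'))
  -- `q_G(X) = |X|` turns this injection from the odd components into `X` into a bijection
  have hsurj := (hinj.bijective_of_nat_card_le hX.ge).2
  have hmate : ∀ ⦃a b⦄, a ∈ X → M.Adj a b → ∃ K, b = z K := by
    intro a b ha hab
    obtain ⟨K, hK⟩ := hsurj ⟨a, ha⟩
    have hxa : x K = a := congrArg Subtype.val hK
    exact ⟨K, hM.1.eq_of_adj_left hab (hxa ▸ (hzx K).symm)⟩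
  refine ⟨hM.1, fun a b ha hab => ?_, fun c a a' b b' ha ha' hab hab' hb hb' => ?_⟩
  · obtain ⟨K, rfl⟩ := hmate ha hab
    exact ⟨K, hz K⟩
  · obtain ⟨K, rfl⟩ := hmate ha hab
    obtain ⟨K', rfl⟩ := hmate ha' hab'
    rw [Subtype.ext (((hz K).eq hb).trans (hb'.eq (hz K')))]

end Barrier

section Contraction

variable {V : Type*} {G : SimpleGraph V} {X : Set V} {M : G.Subgraph}

def MatchedInto (M : G.Subgraph) (c : (G.induce Xᶜ).ConnectedComponent) (x : V) : Prop :=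
  x ∈ X ∧ ∃ y, M.Adj x y ∧ InComponent c y

def EntersViaMatching (M : G.Subgraph) {a t : V} (q : G.Walk a t)
    (c : (G.induce Xᶜ).ConnectedComponent) : Prop :=
  (∃ z ∈ q.support, InComponent c z) → ∃ x ∈ q.support, MatchedInto M c x

def HasAltContraction (F : Set (Sym2 (HVert G X))) (s e : HVert G X) {a t : V}
    (q : G.Walk a t) : Prop :=
  ∃ p' : (HGraph G X).Walk s e,
    p'.IsPath ∧ IsAltList F p'.edges ∧ p'.support = contractSupport G X q.support

def ContractsFromX (M : G.Subgraph) (e : HVert G X) {a t : V} (q : G.Walk a t) : Prop :=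
  ∀ ha : a ∈ X, IsAltList M.edgeSet q.edges →
    (∀ c : (G.induce Xᶜ).ConnectedComponent, EntersViaMatching M q c) ∧
      HasAltContraction (projEdges G X M) (Sum.inl ⟨a, ha⟩) e q

/-- The walk runs inside the odd component `K`, which it entered along the `M`-edge from the
unique vertex of `X` matched into `K`; that vertex lies behind it, and the next edge may or may
not lie in `M`. -/
def ContractsFromComponent (M : G.Subgraph) (e : HVert G X) {a t : V} (q : G.Walk a t) :
    Prop :=
  ∀ (K : OddCompT G X) (F : Set (Sym2 V)), InComponent K.1 a →
    (F = M.edgeSet ∨ F = M.edgeSetᶜ) → IsAltList F q.edges →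
    (∀ x ∈ q.support, ¬ MatchedInto M K.1 x) →
    (∀ c ≠ K.1, EntersViaMatching M q c) ∧
      HasAltContraction (projEdges G X M)ᶜ (Sum.inr K) e q

theorem EntersViaMatching.cons {a b t : V} {c : (G.induce Xᶜ).ConnectedComponent}
    {q : G.Walk b t} (h : EntersViaMatching M q c) (ha : ¬ InComponent c a) (hab : G.Adj a b) :
    EntersViaMatching M (Walk.cons hab q) c := by
  rintro ⟨z, hz, hzc⟩
  rw [Walk.support_cons, List.mem_cons] at hz
  rcases hz with rfl | hz
  · exact absurd hzc ha
  · obtain ⟨x, hx, hxc⟩ := h ⟨z, hz, hzc⟩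
    exact ⟨x, by simp [hx], hxc⟩

variable {t : V} {e : HVert G X}

theorem contractsFromX_nil (ht : projV G X t = some e) :
    ContractsFromX M e (Walk.nil : G.Walk t t) := by
  intro htX _
  obtain rfl : e = Sum.inl ⟨t, htX⟩ := Option.some.inj (ht.symm.trans (projV_of_mem htX))
  refine ⟨fun c ⟨z, hz, hzc⟩ => ?_, Walk.nil, Walk.IsPath.nil, isAltList_nil,
    (contractSupport_support_nil (projV_of_mem htX)).symm⟩
  rw [Walk.support_nil, List.mem_singleton] at hz
  exact absurd (hz ▸ htX) hzc.notMem

theorem contractsFromComponent_nil (ht : projV G X t = some e) :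
    ContractsFromComponent M e (Walk.nil : G.Walk t t) := by
  intro K _ hK _ _ _
  obtain rfl : e = Sum.inr K := Option.some.inj (ht.symm.trans (projV_of_inComponent hK))
  refine ⟨fun c hc ⟨z, hz, hzc⟩ => ?_, Walk.nil, Walk.IsPath.nil, isAltList_nil,
    (contractSupport_support_nil (projV_of_inComponent hK)).symm⟩
  rw [Walk.support_nil, List.mem_singleton] at hz
  exact absurd (hzc.eq (hz ▸ hK)) hc

theorem contractsFromX_cons (hM : MatchesIntoOddComponents M X) {a b : V} (hab : G.Adj a b)
    {q : G.Walk b t} (ha : a ∉ q.support) (ih : ContractsFromComponent M e q) :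
    ContractsFromX M e (Walk.cons hab q) := by
  intro haX halt
  rw [Walk.edges_cons, isAltList_cons] at halt
  have hMab : M.Adj a b := halt.1
  obtain ⟨K, hbK⟩ := hM.exists_inComponent haX hMab
  -- `a` is the only vertex of `X` matched into `K`, and the path does not return to it
  have hfresh : ∀ x ∈ q.support, ¬ MatchedInto M K.1 x := by
    rintro x hx ⟨hxX, y, hxy, hyK⟩
    obtain rfl : y = b := hM.eq_of_adj hxX haX hxy hMab hyK hbK
    exact ha (hM.isMatching.eq_of_adj_right hxy hMab ▸ hx)
  obtain ⟨henter, p', hp', halt', hsupp⟩ := ih K _ hbK (Or.inr rfl) halt.2 hfresh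
  refine ⟨fun c => ?_, Walk.cons (HGraph.adj_inl_inr hab hbK) p', ?_, ?_, ?_⟩
  · by_cases hc : c = K.1
    · exact fun _ => ⟨a, by simp, haX, b, hMab, hc ▸ hbK⟩
    · exact (henter c hc).cons (fun h => h.notMem haX) hab
  · rw [Walk.cons_isPath_iff, hsupp]
    refine ⟨hp', fun hmem => ?_⟩
    obtain ⟨z, hz, hza⟩ := mem_contractSupport hmem
    obtain rfl : z = a := eq_of_projV_eq_inl hza
    exact ha hz
  · rw [Walk.edges_cons, isAltList_cons]
    exact ⟨mem_projEdges_iff.2 ⟨b, hMab, hbK⟩, halt'⟩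
  · rw [Walk.support_cons, hsupp, contractSupport_support_cons_of_ne hab q (projV_of_mem haX)
      (projV_of_inComponent hbK) Sum.inl_ne_inr]

theorem contractsFromComponent_cons_of_mem {a b : V} (hab : G.Adj a b) {q : G.Walk b t}
    (hb : b ∈ X) (ih : ContractsFromX M e q) : ContractsFromComponent M e (Walk.cons hab q) := by
  intro K F haK hF halt hfresh
  rw [Walk.edges_cons, isAltList_cons] at halt
  have hbK : ¬ ∃ y, M.Adj b y ∧ InComponent K.1 y := fun h => hfresh b (by simp) ⟨hb, h⟩
  have hF' : Fᶜ = M.edgeSet := by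
    rcases hF with rfl | rfl
    · exact absurd halt.1 fun h => hbK ⟨a, M.adj_symm h, haK⟩
    · exact compl_compl _
  obtain ⟨henter, p', hp', halt', hsupp⟩ := ih hb (hF' ▸ halt.2)
  refine ⟨fun c hc => (henter c).cons (fun h => hc (h.eq haK)) hab,
    Walk.cons (HGraph.adj_inl_inr hab.symm haK).symm p', ?_, ?_, ?_⟩
  · rw [Walk.cons_isPath_iff, hsupp]
    refine ⟨hp', fun hmem => ?_⟩
    obtain ⟨z, hz, hzK⟩ := mem_contractSupport hmem
    obtain ⟨x, hx, hxK⟩ := henter K.1 ⟨z, hz, inComponent_of_projV_eq_inr hzK⟩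
    exact hfresh x (by simp [hx]) hxK
  · rw [Walk.edges_cons, isAltList_cons, compl_compl, Sym2.eq_swap]
    exact ⟨fun h => hbK (mem_projEdges_iff.1 h), halt'⟩
  · rw [Walk.support_cons, hsupp, contractSupport_support_cons_of_ne hab q
      (projV_of_inComponent haK) (projV_of_mem hb) Sum.inr_ne_inl]

theorem contractsFromComponent_cons_of_notMem {a b : V} (hab : G.Adj a b) {q : G.Walk b t}
    (hb : b ∉ X) (ih : ContractsFromComponent M e q) :
    ContractsFromComponent M e (Walk.cons hab q) := by
  intro K F haK hF halt hfresh
  rw [Walk.edges_cons, isAltList_cons] at halt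
  have hbK := haK.of_adj hb hab
  obtain ⟨henter, p', hp', halt', hsupp⟩ := ih K Fᶜ hbK
    (by rcases hF with rfl | rfl <;> simp) halt.2 (fun x hx => hfresh x (by simp [hx]))
  refine ⟨fun c hc => (henter c hc).cons (fun h => hc (h.eq haK)) hab, p', hp', halt', ?_⟩
  rw [hsupp, contractSupport_support_cons_of_eq hab q (projV_of_inComponent haK)
    (projV_of_inComponent hbK)]

theorem contracts_of_isPath (hM : MatchesIntoOddComponents M X) (ht : projV G X t = some e)
    {a : V} (q : G.Walk a t) (hq : q.IsPath) :
    ContractsFromX M e q ∧ ContractsFromComponent M e q := by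
  induction q with
  | nil => exact ⟨contractsFromX_nil ht, contractsFromComponent_nil ht⟩
  | @cons a b _ hab q ih =>
    rw [Walk.cons_isPath_iff] at hq
    obtain ⟨ihX, ihK⟩ := ih ht hq.1
    refine ⟨contractsFromX_cons hM hab hq.2 ihK, ?_⟩
    by_cases hb : b ∈ X
    · exact contractsFromComponent_cons_of_mem hab hb ihX
    · exact contractsFromComponent_cons_of_notMem hab hb ihK

theorem contraction_of_isAltList (hM : MatchesIntoOddComponents M X) (ht : projV G X t = some e)
    {u : V} (hu : u ∈ X) (p : G.Walk u t) (hp : p.IsPath) (halt : IsAltList M.edgeSet p.edges) :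
    (∀ z ∈ p.support, z ∈ X ∪ DX G X) ∧
      HasAltContraction (projEdges G X M) (Sum.inl ⟨u, hu⟩) e p := by
  obtain ⟨henter, hcontr⟩ := (contracts_of_isPath hM ht p hp).1 hu halt
  refine ⟨fun z hz => ?_, hcontr⟩
  by_cases hzX : z ∈ X
  · exact Or.inl hzX
  · obtain ⟨x, -, hxX, y, hxy, hy⟩ := henter _ ⟨z, hz, inComponent_mk hzX⟩
    obtain ⟨K, hK⟩ := hM.exists_inComponent hxX hxy
    have hzK : InComponent K.1 z := by
      rw [hK.eq hy]
      exact inComponent_mk hzX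
    exact Or.inr (mem_DX_of_inComponent hzK)

end Contraction

theorem stmt4_general {V : Type*} [Fintype V] (G : SimpleGraph V)
    (X : Set V) (hX : IsOddMaximalBarrier G X)
    (M : SimpleGraph.Subgraph G) (hM : M.IsPerfectMatching)
    (u v w : V) (hu : u ∈ X) (hv : v ∈ X)
    (hw : w ∈ Xᶜ)
    (how : Odd ((G.induce Xᶜ).connectedComponentMk ⟨w, hw⟩).supp.ncard) :
    (∀ p : G.Walk u v, IsBalancedPath M.edgeSet p →
      (∀ z ∈ p.support, z ∈ X ∪ DX G X) ∧
      ∃ p' : (HGraph G X).Walk (Sum.inl ⟨u, hu⟩) (Sum.inl ⟨v, hv⟩),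
        IsBalancedPath (projEdges G X M) p' ∧
        p'.support = contractSupport G X p.support) ∧
    (∀ p : G.Walk u w, IsSaturatedPath M.edgeSet p →
      (∀ z ∈ p.support, z ∈ X ∪ DX G X) ∧
      ∃ p' : (HGraph G X).Walk (Sum.inl ⟨u, hu⟩)
          (Sum.inr ⟨(G.induce Xᶜ).connectedComponentMk ⟨w, hw⟩, how⟩),
        IsSaturatedPath (projEdges G X M) p' ∧
        p'.support = contractSupport G X p.support) := by
  have hMX := hM.matchesIntoOddComponents hX.1
  refine ⟨fun p ⟨hp, _, halt⟩ => ?_, fun p ⟨hp, _, halt⟩ => ?_⟩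
  · obtain ⟨hsupp, p', hp', halt', hsupp'⟩ :=
      contraction_of_isAltList hMX (projV_of_mem hv) hu p hp halt
    refine ⟨hsupp, p', ⟨hp', ?_, halt'⟩, hsupp'⟩
    simp [HGraph.coloring.even_length_iff_congr]
  · obtain ⟨hsupp, p', hp', halt', hsupp'⟩ :=
      contraction_of_isAltList hMX (projV_of_inComponent (K := ⟨_, how⟩) (inComponent_mk hw)) hu p hp halt
    refine ⟨hsupp, p', ⟨hp', ?_, halt'⟩, hsupp'⟩
    simp [HGraph.coloring.odd_length_iff_not_congr]

theorem stmt4 {V : Type*} [Fintype V] (G : SimpleGraph V) (hG : Factorizable G)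
    (X : Set V) (hX : IsOddMaximalBarrier G X)
    (M : SimpleGraph.Subgraph G) (hM : M.IsPerfectMatching)
    (u v w : V) (hu : u ∈ X) (hv : v ∈ X)
    (hw : w ∈ Xᶜ)
    (how : Odd ((G.induce Xᶜ).connectedComponentMk ⟨w, hw⟩).supp.ncard) :
    (∀ p : G.Walk u v, IsBalancedPath M.edgeSet p →
      (∀ z ∈ p.support, z ∈ X ∪ DX G X) ∧
      ∃ p' : (HGraph G X).Walk (Sum.inl ⟨u, hu⟩) (Sum.inl ⟨v, hv⟩),
        IsBalancedPath (projEdges G X M) p' ∧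
        p'.support = contractSupport G X p.support) ∧
    (∀ p : G.Walk u w, IsSaturatedPath M.edgeSet p →
      (∀ z ∈ p.support, z ∈ X ∪ DX G X) ∧
      ∃ p' : (HGraph G X).Walk (Sum.inl ⟨u, hu⟩)
          (Sum.inr ⟨(G.induce Xᶜ).connectedComponentMk ⟨w, hw⟩, how⟩),
        IsSaturatedPath (projEdges G X M) p' ∧
        p'.support = contractSupport G X p.support) :=
  stmt4_general G X hX M hM u v w hu hv hw how
end

section
/- Let G be a factorizable graph, X an odd-maximal barrier of G, and M a perfect matching of G. Let D̂_1 and D̂_2 be the expansions of DM-components D_1 and D_2 of H_X(G) with D_1 ⪯ D_2. Then for any u ∈ X ∩ V(D̂_1) and w ∈ V(D̂_2) \ X, every M-saturated path P between u and w traverses X ∩ V(D̂_2), i.e., contains a vertex of X ∩ V(D̂_2). -/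
open SimpleGraph

/-!
Since `X` is a barrier, `M` matches `X` bijectively onto the odd components of `G - X`: each odd
component sends an `M`-edge to `X` by parity, and there are exactly `|X|` of them. Consequently,
on an `M`-saturated path starting in `X` the vertices of `X` occur only at even positions. Where
the path last enters the odd component `K` containing `w`, it does so from a vertex `x ∈ X` at an
even position, i.e. along an `M`-edge, so `x` is matched into `K`. As the `M`-edges of `δ(X)` form
a perfect matching of `H_X(G)`, the edge `xK` is allowed, and `x` lies in the DM-component of `K`.
-/

section MatchingsAndBarriers

variable {V : Type*} {G : SimpleGraph V} {X : Set V} {M : G.Subgraph}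

theorem SimpleGraph.Subgraph.IsPerfectMatching.exists_adj_notMem_of_odd_ncard [Finite V]
    (hM : M.IsPerfectMatching) {S : Set V} (hS : Odd S.ncard) :
    ∃ v ∈ S, ∃ w ∉ S, M.Adj v w := by
  by_contra! hclosed
  have hmatch : (M.induce S).IsMatching := by
    intro v hv
    obtain ⟨w, hvw, huniq⟩ := hM.1 (hM.2 v)
    have hwS : w ∈ S := by_contra fun hwS => hclosed v hv w hwS hvw
    exact ⟨w, ⟨hv, hwS, hvw⟩, fun y hy => huniq y hy.2.2⟩
  have := Fintype.ofFinite (M.induce S).verts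
  have heven := hmatch.even_card
  rw [← Set.ncard_eq_toFinset_card', Subgraph.induce_verts] at heven
  exact Nat.not_even_iff_odd.2 hS heven

theorem SimpleGraph.Walk.exists_getVert_notMem_and_mem {u v : V} (p : G.Walk u v) {S : Set V}
    (hu : u ∉ S) {t : ℕ} (ht : p.getVert t ∈ S) :
    ∃ i < t, p.getVert i ∉ S ∧ p.getVert (i + 1) ∈ S := by
  obtain ⟨i, hi, hi_succ, hS⟩ := Nat.exists_not_and_succ_of_not_zero_of_exists
    (p := fun n => n ≤ t ∧ p.getVert n ∈ S) (by simpa [p.getVert_zero] using hu)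
    ⟨t, le_rfl, ht⟩
  exact ⟨i, hi_succ, fun h => hi ⟨by omega, h⟩, hS⟩

theorem IsSaturatedPath.adj_getVert_of_even {u v : V} {p : G.Walk u v}
    (hp : IsSaturatedPath M.edgeSet p) {i : ℕ} (hi : i < p.length) (he : Even i) :
    M.Adj (p.getVert i) (p.getVert (i + 1)) := by
  have := (hp.2.2 i (by simpa using hi)).2 he
  rwa [List.get_eq_getElem, Walk.getElem_edges, Subgraph.mem_edgeSet] at this

theorem SimpleGraph.ConnectedComponent.mem_image_supp_of_adj
    {K : (G.induce Xᶜ).ConnectedComponent} {v w : V}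
    (hv : v ∈ Subtype.val '' K.supp) (hw : w ∉ X) (hvw : G.Adj v w) :
    w ∈ Subtype.val '' K.supp := by
  obtain ⟨⟨v, _⟩, hvK, rfl⟩ := hv
  refine ⟨⟨w, hw⟩, ?_, rfl⟩
  rw [ConnectedComponent.mem_supp_iff] at hvK ⊢
  rw [← hvK]
  exact ConnectedComponent.connectedComponentMk_eq_of_adj (G := G.induce Xᶜ) hvw.symm

theorem SimpleGraph.Walk.exists_getVert_mem_and_mem_supp {u v : V} (p : G.Walk u v)
    (hu : u ∈ X) (K : (G.induce Xᶜ).ConnectedComponent) {t : ℕ} (ht : t ≤ p.length)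
    (htK : p.getVert t ∈ Subtype.val '' K.supp) :
    ∃ i < t, p.getVert i ∈ X ∧ p.getVert (i + 1) ∈ Subtype.val '' K.supp := by
  obtain ⟨i, hit, hiK, hiK'⟩ := p.exists_getVert_notMem_and_mem
    (by rintro ⟨y, -, rfl⟩; exact y.2 hu) htK
  refine ⟨i, hit, by_contra fun hiX => hiK ?_, hiK'⟩
  exact ConnectedComponent.mem_image_supp_of_adj hiK' hiX (p.adj_getVert_succ (by omega)).symm

theorem SimpleGraph.Subgraph.IsPerfectMatching.exists_adj_of_odd_ncard_supp [Finite V]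
    (hM : M.IsPerfectMatching) (K : (G.induce Xᶜ).ConnectedComponent) (hK : Odd K.supp.ncard) :
    ∃ x ∈ X, ∃ y ∈ Subtype.val '' K.supp, M.Adj x y := by
  rw [← Set.ncard_image_of_injective _ Subtype.val_injective] at hK
  obtain ⟨y, hyK, x, hxK, hyx⟩ := hM.exists_adj_notMem_of_odd_ncard hK
  have hx : x ∈ X := by_contra fun hx =>
    hxK (ConnectedComponent.mem_image_supp_of_adj hyK hx (M.adj_sub hyx))
  exact ⟨x, hx, y, hyK, hyx.symm⟩

def MatchesInto (M : G.Subgraph) (x : X) (c : OddCompT G X) : Prop :=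
  ∃ y ∈ Subtype.val '' c.1.supp, M.Adj x y

theorem MatchesInto.eq_of_isMatching (hM : M.IsMatching) {x : X} {c c' : OddCompT G X}
    (h : MatchesInto M x c) (h' : MatchesInto M x c') : c = c' := by
  obtain ⟨_, ⟨y, hyc, rfl⟩, hxy⟩ := h
  obtain ⟨_, ⟨y', hyc', rfl⟩, hxy'⟩ := h'
  obtain rfl : y = y' := Subtype.ext (hM.eq_of_adj_left hxy hxy')
  exact Subtype.ext (ConnectedComponent.eq_of_common_vertex hyc hyc')

theorem MatchesInto.hGraph_adj {x : X} {c : OddCompT G X} (h : MatchesInto M x c) :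
    (HGraph G X).Adj (Sum.inl x) (Sum.inr c) := by
  obtain ⟨_, ⟨y, hyc, rfl⟩, hxy⟩ := h
  rw [HGraph, fromRel_adj]
  exact ⟨Sum.inl_ne_inr, Or.inl ⟨x, c, y, rfl, rfl, hyc, M.adj_sub hxy⟩⟩

/-- By parity every odd component receives an `M`-edge from `X`; as `q_G(X) = |X|`, the resulting
injection into `X` is a bijection. -/
theorem IsBarrier.exists_equiv_matchesInto [Finite V] (hB : IsBarrier G X)
    (hM : M.IsPerfectMatching) :
    ∃ f : OddCompT G X ≃ X, ∀ x c, MatchesInto M x c ↔ f c = x := by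
  have hex (c : OddCompT G X) : ∃ x, MatchesInto M x c := by
    obtain ⟨x, hx, hxc⟩ := hM.exists_adj_of_odd_ncard_supp c.1 c.2
    exact ⟨⟨x, hx⟩, hxc⟩
  choose f hf using hex
  have hinj : f.Injective := fun c c' hcc' =>
    (hf c).eq_of_isMatching hM.1 (hcc' ▸ hf c')
  have hcard : Nat.card X ≤ Nat.card (OddCompT G X) := by
    rw [Nat.card_coe_set_eq, ← hB, qG, ← Nat.card_coe_set_eq]
    rfl
  have hbij := hinj.bijective_of_nat_card_le hcard
  refine ⟨Equiv.ofBijective f hbij, fun x c => ⟨fun hxc => ?_, fun hfc => hfc ▸ hf c⟩⟩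
  obtain ⟨c', rfl⟩ := hbij.2 x
  exact congrArg f ((hf c').eq_of_isMatching hM.1 hxc).symm

theorem IsBarrier.exists_mem_supp_of_adj [Finite V] (hB : IsBarrier G X)
    (hM : M.IsPerfectMatching) {x y : V} (hx : x ∈ X) (hxy : M.Adj x y) :
    ∃ c : OddCompT G X, y ∈ Subtype.val '' c.1.supp := by
  obtain ⟨f, hf⟩ := hB.exists_equiv_matchesInto hM
  obtain ⟨y', hy'c, hxy'⟩ := (hf ⟨x, hx⟩ (f.symm ⟨x, hx⟩)).2 (f.apply_symm_apply _)
  exact ⟨_, hM.1.eq_of_adj_left hxy' hxy ▸ hy'c⟩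

theorem IsBarrier.eq_of_matchesInto [Finite V] (hB : IsBarrier G X)
    (hM : M.IsPerfectMatching) {x x' : X} {c : OddCompT G X}
    (h : MatchesInto M x c) (h' : MatchesInto M x' c) : x = x' := by
  obtain ⟨f, hf⟩ := hB.exists_equiv_matchesInto hM
  exact ((hf x c).1 h).symm.trans ((hf x' c).1 h')

/-- The `M`-edges between `X` and the odd components induce a perfect matching of `H_X(G)`. -/
theorem IsBarrier.allowedSubgraph_hGraph_adj [Finite V] (hB : IsBarrier G X)
    (hM : M.IsPerfectMatching) {x : X} {c : OddCompT G X} (hxc : MatchesInto M x c) :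
    (allowedSubgraph (HGraph G X)).Adj (Sum.inl x) (Sum.inr c) := by
  obtain ⟨f, hf⟩ := hB.exists_equiv_matchesInto hM
  let R : SimpleGraph (HVert G X) :=
    fromRel fun a b => ∃ c, a = Sum.inl (f c) ∧ b = Sum.inr c
  have hR : R ≤ HGraph G X := by
    rintro a b ⟨-, ⟨c, rfl, rfl⟩ | ⟨c, rfl, rfl⟩⟩
    · exact ((hf _ c).2 rfl).hGraph_adj
    · exact ((hf _ c).2 rfl).hGraph_adj.symm
  have hN : ((HGraph G X).toSubgraph R hR).IsPerfectMatching := by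
    rw [Subgraph.isPerfectMatching_iff]
    rintro (x | c)
    · refine ⟨Sum.inr (f.symm x), ⟨Sum.inl_ne_inr, Or.inl ⟨_, by simp, rfl⟩⟩, ?_⟩
      rintro b ⟨-, ⟨c, hxc, rfl⟩ | ⟨c, -, hxc⟩⟩
      · rw [Sum.inl.inj hxc, f.symm_apply_apply]
      · exact absurd hxc Sum.inl_ne_inr
    · refine ⟨Sum.inl (f c), ⟨Sum.inr_ne_inl, Or.inr ⟨c, rfl, rfl⟩⟩, ?_⟩
      rintro b ⟨-, ⟨c', hcc', -⟩ | ⟨c', rfl, hcc'⟩⟩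
      · exact absurd hcc' Sum.inr_ne_inl
      · rw [Sum.inr.inj hcc']
  have hxcR : R.Adj (Sum.inl x) (Sum.inr c) :=
    ⟨Sum.inl_ne_inr, Or.inl ⟨c, by rw [(hf x c).1 hxc], rfl⟩⟩
  rw [allowedSubgraph, fromEdgeSet_adj]
  exact ⟨⟨hxc.hGraph_adj, _, hN, hxcR⟩, Sum.inl_ne_inr⟩

/-- If `v_j ∈ X` with `j` odd, then `v_{j-1}` is the partner of `v_j` in an odd component `K`;
the path enters `K` from some `v_i ∈ X` with `i < j - 1`, and `i` odd contradicts minimality of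
`j`, while `i` even makes `v_i` a second vertex of `X` matched into `K`. -/
theorem IsBarrier.even_of_getVert_mem [Finite V] (hB : IsBarrier G X)
    (hM : M.IsPerfectMatching) {u v : V} {p : G.Walk u v} (hp : p.IsPath) (hu : u ∈ X)
    (halt : ∀ i < p.length, Even i → M.Adj (p.getVert i) (p.getVert (i + 1)))
    {j : ℕ} (hj : j ≤ p.length) (hjX : p.getVert j ∈ X) : Even j := by
  induction j using Nat.strong_induction_on with
  | _ j ih =>
    by_contra hjodd
    obtain ⟨k, rfl⟩ := Nat.not_even_iff_odd.1 hjodd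
    have hM_pred : M.Adj (p.getVert (2 * k)) (p.getVert (2 * k + 1)) :=
      halt _ (by omega) (even_two_mul k)
    obtain ⟨c, hkc⟩ := hB.exists_mem_supp_of_adj hM hjX hM_pred.symm
    obtain ⟨i, hik, hiX, hic⟩ := p.exists_getVert_mem_and_mem_supp hu c.1 (by omega) hkc
    have hieven : Even i := ih i (by omega) (by omega) hiX
    have hsame : p.getVert i = p.getVert (2 * k + 1) := congrArg Subtype.val <|
      hB.eq_of_matchesInto hM (x := ⟨_, hiX⟩) (x' := ⟨_, hjX⟩)
        ⟨_, hic, halt i (by omega) hieven⟩ ⟨_, hkc, hM_pred.symm⟩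
    have := hp.getVert_injOn (show i ≤ p.length by omega) hj hsame
    omega

end MatchingsAndBarriers

theorem stmt9_general {V : Type*} [Fintype V] (G : SimpleGraph V)
    (X : Set V) (hX : IsOddMaximalBarrier G X)
    (M : SimpleGraph.Subgraph G) (hM : M.IsPerfectMatching)
    (c d : (allowedSubgraph (HGraph G X)).ConnectedComponent)
    (u : V) (hu : u ∈ X ∩ expansionVerts G X c)
    (w : V) (hw : w ∈ expansionVerts G X d \ X)
    (p : G.Walk u w) (hp : IsSaturatedPath M.edgeSet p) :
    ∃ z ∈ p.support, z ∈ X ∩ expansionVerts G X d := by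
  obtain ⟨⟨hwX, -⟩ | ⟨hwX, hodd, hwd⟩, hwX'⟩ := hw
  · exact absurd hwX hwX'
  let K : OddCompT G X := ⟨_, hodd⟩
  have hwK : p.getVert p.length ∈ Subtype.val '' K.1.supp := by
    rw [p.getVert_length]
    exact ⟨⟨w, hwX⟩, rfl, rfl⟩
  obtain ⟨i, hi, hiX, hiK⟩ := p.exists_getVert_mem_and_mem_supp hu.1 K.1 le_rfl hwK
  have hieven := hX.1.even_of_getVert_mem hM hp.1 hu.1
    (fun _ h => hp.adj_getVert_of_even h) hi.le hiX
  have hiK : MatchesInto M ⟨_, hiX⟩ K := ⟨_, hiK, hp.adj_getVert_of_even hi hieven⟩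
  refine ⟨p.getVert i, p.getVert_mem_support i, hiX, Or.inl ⟨hiX, ?_⟩⟩
  rw [ConnectedComponent.mem_supp_iff] at hwd ⊢
  rw [← hwd]
  exact ConnectedComponent.connectedComponentMk_eq_of_adj
    (hX.1.allowedSubgraph_hGraph_adj hM hiK)

theorem stmt9 {V : Type*} [Fintype V] (G : SimpleGraph V) (hG : Factorizable G)
    (X : Set V) (hX : IsOddMaximalBarrier G X)
    (M : SimpleGraph.Subgraph G) (hM : M.IsPerfectMatching)
    (c d : (allowedSubgraph (HGraph G X)).ConnectedComponent)
    (hcd : dmLE (HGraph G X) (Set.range (Sum.inl : {x : V // x ∈ X} → HVert G X)) c d)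
    (u : V) (hu : u ∈ X ∩ expansionVerts G X c)
    (w : V) (hw : w ∈ expansionVerts G X d \ X)
    (p : G.Walk u w) (hp : IsSaturatedPath M.edgeSet p) :
    ∃ z ∈ p.support, z ∈ X ∩ expansionVerts G X d :=
  stmt9_general G X hX M hM c d u hu w hw p hp
end

section
/- Let G be a factorizable graph and M a perfect matching of G. If X ⊆ V(G) is a barrier of G, then for any u, v ∈ X there is no M-saturated path between u and v. -/
open SimpleGraph

/-!
If `P` is an `M`-saturated path between `u` and `v`, then `M ∆ E(P)` is a matching of `G`
covering every vertex except `u` and `v`. A matching covering `V(G) \ X` sends a matching edge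
from every odd component of `G - X` to a distinct vertex of `X` (an odd component cannot be
matched inside itself), so `q_G(X) ≤ |X \ {u, v}| = |X| - 2`, contradicting `q_G(X) = |X|`.
-/

namespace SimpleGraph

open scoped symmDiff

namespace Subgraph.IsMatching

variable {V : Type*} {G : SimpleGraph V} {N : G.Subgraph} {X : Set V}

lemma exists_adj_of_odd_ncard_supp [Finite V] (hN : N.IsMatching) (hX : Xᶜ ⊆ N.verts)
    {c : (G.induce Xᶜ).ConnectedComponent} (hc : Odd c.supp.ncard) :
    ∃ w ∈ c.supp, ∃ x ∈ X, N.Adj w x := by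
  by_contra! hno
  have hmatch : (N.induce (Subtype.val '' c.supp)).IsMatching := by
    rintro _ ⟨w, hw, rfl⟩
    obtain ⟨y, hy, huniq⟩ := hN (hX w.2)
    have hyX : y ∉ X := fun hyX => hno w hw y hyX hy
    have hyc : (⟨y, hyX⟩ : (Xᶜ : Set V)) ∈ c.supp :=
      (c.mem_supp_congr_adj (by simpa using N.adj_sub hy)).mp hw
    exact ⟨y, ⟨⟨w, hw, rfl⟩, ⟨_, hyc, rfl⟩, hy⟩, fun z hz => huniq z hz.2.2⟩
  have := Fintype.ofFinite (N.induce (Subtype.val '' c.supp)).verts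
  have heven := hmatch.even_card
  rw [← Set.ncard_eq_toFinset_card', induce_verts,
    Set.ncard_image_of_injective _ Subtype.val_injective] at heven
  exact Nat.not_even_iff_odd.mpr hc heven

lemma qG_le_ncard_inter_verts [Finite V] (hN : N.IsMatching) (hX : Xᶜ ⊆ N.verts) :
    qG G X ≤ (X ∩ N.verts).ncard := by
  choose w hw x hx hadj using fun c : OddCompT G X => hN.exists_adj_of_odd_ncard_supp hX c.2
  have hinj : Function.Injective
      fun c => (⟨x c, hx c, N.edge_vert (hadj c).symm⟩ : ↥(X ∩ N.verts)) := by
    intro c d hcd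
    have hxcd : x c = x d := congrArg Subtype.val hcd
    have hwcd : w c = w d := Subtype.val_injective (hN.eq_of_adj_right (hadj c) (hxcd ▸ hadj d))
    exact Subtype.ext (ConnectedComponent.eq_of_common_vertex (hw c) (hwcd ▸ hw d))
  rw [qG, ← Nat.card_coe_set_eq, ← Nat.card_coe_set_eq]
  exact Nat.card_le_card_of_injective _ hinj

end Subgraph.IsMatching

variable {V : Type*} {G : SimpleGraph V} {M : G.Subgraph} {u v w y : V} {p : G.Walk u v}

lemma Walk.symmDiff_toSubgraph_adj_of_notMem_support (hw : w ∉ p.support) :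
    (M.spanningCoe ∆ p.toSubgraph.spanningCoe).Adj w y ↔ M.Adj w y := by
  have : ¬ p.toSubgraph.Adj w y := fun h => hw (Walk.mem_support_of_adj_toSubgraph h)
  simp [symmDiff_def, this]

namespace IsSaturatedPath

lemma not_nil (hp : IsSaturatedPath M.edgeSet p) : ¬ p.Nil :=
  Walk.not_nil_iff_lt_length.mpr hp.2.1.pos

lemma ne (hp : IsSaturatedPath M.edgeSet p) : u ≠ v :=
  fun h => hp.not_nil (hp.1.nil_iff_eq.mpr h)

lemma adj_getVert_iff (hp : IsSaturatedPath M.edgeSet p) {i : ℕ} (hi : i < p.length) :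
    M.Adj (p.getVert i) (p.getVert (i + 1)) ↔ Even i := by
  simpa [Walk.getElem_edges] using hp.2.2 i (by simpa using hi)

lemma exists_adj_toSubgraph_adj (hp : IsSaturatedPath M.edgeSet p) (hw : w ∈ p.support) :
    ∃ y, M.Adj w y ∧ p.toSubgraph.Adj w y := by
  obtain ⟨i, rfl, hi⟩ := Walk.mem_support_iff_exists_getVert.mp hw
  rcases Nat.even_or_odd i with heven | hodd
  · have hlt : i < p.length :=
      lt_of_le_of_ne hi fun h => Nat.not_even_iff_odd.mpr hp.2.1 (h ▸ heven)
    exact ⟨_, (hp.adj_getVert_iff hlt).mpr heven, p.toSubgraph_adj_getVert hlt⟩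
  · obtain ⟨j, rfl⟩ : ∃ j, i = j + 1 := ⟨i - 1, by have := hodd.pos; omega⟩
    have hj : Even j := by obtain ⟨k, hk⟩ := hodd; exact ⟨k, by omega⟩
    exact ⟨_, ((hp.adj_getVert_iff (by omega)).mpr hj).symm,
      (p.toSubgraph_adj_getVert (by omega)).symm⟩

lemma toSubgraph_adj_of_adj (hM : M.IsMatching) (hp : IsSaturatedPath M.edgeSet p)
    (hw : w ∈ p.support) (hwy : M.Adj w y) : p.toSubgraph.Adj w y := by
  obtain ⟨y', hy', hpy'⟩ := hp.exists_adj_toSubgraph_adj hw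
  rwa [hM.eq_of_adj_left hwy hy']

lemma adj_of_toSubgraph_adj_start (hp : IsSaturatedPath M.edgeSet p)
    (huy : p.toSubgraph.Adj u y) : M.Adj u y := by
  have hy : y ∈ p.toSubgraph.neighborSet u := huy
  rw [hp.1.neighborSet_toSubgraph_startpoint hp.not_nil, Set.mem_singleton_iff] at hy
  simpa [hy] using (hp.adj_getVert_iff hp.2.1.pos).mpr ⟨0, rfl⟩

lemma adj_of_toSubgraph_adj_end (hp : IsSaturatedPath M.edgeSet p)
    (hvy : p.toSubgraph.Adj v y) : M.Adj v y := by
  have hy : y ∈ p.toSubgraph.neighborSet v := hvy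
  rw [hp.1.neighborSet_toSubgraph_endpoint hp.not_nil, Set.mem_singleton_iff] at hy
  have hlast := (hp.adj_getVert_iff (i := p.length - 1) (Nat.sub_lt hp.2.1.pos one_pos)).mpr
    (by obtain ⟨k, hk⟩ := hp.2.1; exact ⟨k, by omega⟩)
  rw [Nat.sub_one_add_one hp.2.1.pos.ne', Walk.getVert_length] at hlast
  exact hy ▸ hlast.symm

lemma existsUnique_toSubgraph_adj_not_adj (hp : IsSaturatedPath M.edgeSet p)
    (hw : w ∈ p.support) (hwu : w ≠ u) (hwv : w ≠ v) :
    ∃! y, p.toSubgraph.Adj w y ∧ ¬ M.Adj w y := by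
  obtain ⟨i, rfl, hi⟩ := Walk.mem_support_iff_exists_getVert.mp hw
  have hi0 : i ≠ 0 := by rintro rfl; exact hwu p.getVert_zero
  have hlt : i < p.length := lt_of_le_of_ne hi (by rintro rfl; exact hwv p.getVert_length)
  have hnbr (y : V) :
      p.toSubgraph.Adj (p.getVert i) y ↔ y = p.getVert (i - 1) ∨ y = p.getVert (i + 1) :=
    Set.ext_iff.mp (hp.1.neighborSet_toSubgraph_internal hi0 hlt) y
  have hxor :
      M.Adj (p.getVert i) (p.getVert (i - 1)) ↔ ¬ M.Adj (p.getVert i) (p.getVert (i + 1)) := by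
    have hprev := hp.adj_getVert_iff (i := i - 1) (by omega)
    rw [Nat.sub_add_cancel (Nat.pos_of_ne_zero hi0)] at hprev
    rw [M.adj_comm, hprev, hp.adj_getVert_iff hlt]
    obtain ⟨j, rfl⟩ : ∃ j, i = j + 1 := ⟨i - 1, by omega⟩
    simp [Nat.even_add_one]
  simp only [hnbr]
  by_cases hprev : M.Adj (p.getVert i) (p.getVert (i - 1))
  · exact ⟨_, ⟨Or.inr rfl, hxor.mp hprev⟩, by rintro y ⟨rfl | rfl, hy⟩ <;> tauto⟩
  · exact ⟨_, ⟨Or.inl rfl, hprev⟩, by rintro y ⟨rfl | rfl, hy⟩ <;> tauto⟩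

lemma symmDiff_toSubgraph_adj_of_mem_support (hM : M.IsMatching)
    (hp : IsSaturatedPath M.edgeSet p) (hw : w ∈ p.support) :
    (M.spanningCoe ∆ p.toSubgraph.spanningCoe).Adj w y ↔
      p.toSubgraph.Adj w y ∧ ¬ M.Adj w y := by
  have hMP : M.Adj w y → p.toSubgraph.Adj w y := hp.toSubgraph_adj_of_adj hM hw
  simp only [symmDiff_def, sup_adj, sdiff_adj, Subgraph.spanningCoe_adj]
  tauto

lemma exists_isMatching_verts_eq (hM : M.IsPerfectMatching) (hp : IsSaturatedPath M.edgeSet p) :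
    ∃ N : G.Subgraph, N.IsMatching ∧ N.verts = {u, v}ᶜ := by
  set H := M.spanningCoe ∆ p.toSubgraph.spanningCoe
  have hend : ∀ w ∈ ({u, v} : Set V), ∀ y, ¬ H.Adj w y := by
    rintro w (rfl | rfl) y hwy
    · rw [hp.symmDiff_toSubgraph_adj_of_mem_support hM.1 p.start_mem_support] at hwy
      exact hwy.2 (hp.adj_of_toSubgraph_adj_start hwy.1)
    · rw [hp.symmDiff_toSubgraph_adj_of_mem_support hM.1 p.end_mem_support] at hwy
      exact hwy.2 (hp.adj_of_toSubgraph_adj_end hwy.1)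
  have hHG : H ≤ G := fun a b h => by
    simp only [H, symmDiff_def, sup_adj, sdiff_adj, Subgraph.spanningCoe_adj] at h
    rcases h with ⟨h, -⟩ | ⟨h, -⟩ <;> exact h.adj_sub
  let N : G.Subgraph :=
    { verts := {u, v}ᶜ
      Adj := H.Adj
      adj_sub := (hHG ·)
      edge_vert := fun h hw => hend _ hw _ h
      symm := ⟨fun _ _ h => h.symm⟩ }
  refine ⟨N, fun w hw => ?_, rfl⟩
  obtain ⟨hwu, hwv⟩ : w ≠ u ∧ w ≠ v := by simpa [N] using hw
  change ∃! y, H.Adj w y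
  by_cases hwp : w ∈ p.support
  · exact (existsUnique_congr fun _ => hp.symmDiff_toSubgraph_adj_of_mem_support hM.1 hwp).mpr
      (hp.existsUnique_toSubgraph_adj_not_adj hwp hwu hwv)
  · exact (existsUnique_congr fun _ => Walk.symmDiff_toSubgraph_adj_of_notMem_support hwp).mpr
      (hM.1 (hM.2 w))

end IsSaturatedPath

end SimpleGraph

theorem stmt15 {V : Type*} [Fintype V] (G : SimpleGraph V)
    (M : SimpleGraph.Subgraph G) (hM : M.IsPerfectMatching)
    (X : Set V) (hX : IsBarrier G X)
    (u v : V) (hu : u ∈ X) (hv : v ∈ X) :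
    ∀ p : G.Walk u v, ¬ IsSaturatedPath M.edgeSet p := by
  intro p hp
  obtain ⟨N, hN, hverts⟩ := hp.exists_isMatching_verts_eq hM
  have huvX : {u, v} ⊆ X := Set.insert_subset hu (Set.singleton_subset_iff.mpr hv)
  have hle : qG G X ≤ (X \ {u, v}).ncard := by
    simpa only [hverts, ← Set.sdiff_eq] using
      hN.qG_le_ncard_inter_verts (by rw [hverts]; exact Set.compl_subset_compl.mpr huvX)
  have htwo : 2 ≤ X.ncard := Set.ncard_pair hp.ne ▸ Set.ncard_le_ncard huvX
  rw [Set.ncard_sdiff huvX, Set.ncard_pair hp.ne, hX] at hle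
  omega
end

section
/- Let G be a factorizable graph, M a perfect matching of G, and X a barrier of G. Then for any x ∈ X and y ∈ C_X, there is no M-saturated path between x and y, and no M-balanced path from x to y. -/
open SimpleGraph

/-!
If `p` is an `M`-alternating path from `x ∈ X` starting with an `M`-edge, then in the symmetric
difference `M ∆ E(p)` the vertex `x` is isolated while every vertex other than `x` and the end `y`
has exactly one neighbour. When `y ∈ C_X`, each odd component of `G - X` is then left by an edge
of `M ∆ E(p)` (an odd set has no perfect matching), which ends in `X \ {x}`, and distinct odd
components use distinct vertices of `X`. Hence `q_G(X) ≤ |X| - 1`, so `X` is not a barrier.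
-/

lemma IsAltList.adj_getVert_iff {V : Type*} {G : SimpleGraph V} {M : G.Subgraph} {u v : V}
    {p : G.Walk u v} (halt : IsAltList M.edgeSet p.edges) {i : ℕ} (hi : i < p.length) :
    M.Adj (p.getVert i) (p.getVert (i + 1)) ↔ Even i := by
  simpa [Walk.getElem_edges] using halt i (by simpa using hi)

namespace SimpleGraph

variable {V : Type*} {G : SimpleGraph V}

open scoped symmDiff

lemma neighborSet_symmDiff (G₁ G₂ : SimpleGraph V) (v : V) :
    (G₁ ∆ G₂).neighborSet v = G₁.neighborSet v ∆ G₂.neighborSet v := by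
  ext w
  simp [symmDiff_def]

lemma Subgraph.neighborSet_spanningCoe (M : G.Subgraph) (v : V) :
    M.spanningCoe.neighborSet v = M.neighborSet v := rfl

lemma existsUnique_adj_of_neighborSet_eq_singleton {H : SimpleGraph V} {v w : V}
    (h : H.neighborSet v = {w}) : ∃! w', H.Adj v w' :=
  ⟨w, (h ▸ rfl : w ∈ H.neighborSet v), fun _ hw' => (h ▸ hw' : _ ∈ ({w} : Set V))⟩

lemma Subgraph.IsMatching.neighborSet_eq {M : G.Subgraph} (hM : M.IsMatching) {v w : V}
    (h : M.Adj v w) : M.neighborSet v = {w} :=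
  Set.ext fun _ => ⟨fun h' => hM.eq_of_adj_left h' h, fun h' => h' ▸ h⟩

lemma exists_adj_mem_of_odd_ncard_supp [Finite V] {X : Set V} {N : SimpleGraph V} (hN : N ≤ G)
    {c : (G.induce Xᶜ).ConnectedComponent} (hc : Odd c.supp.ncard)
    (h : ∀ v ∈ c.supp, ∃! w, N.Adj v w) : ∃ v ∈ c.supp, ∃ w ∈ X, N.Adj v w := by
  by_contra! hno
  set K : N.Subgraph := (⊤ : N.Subgraph).induce (Subtype.val '' c.supp)
  have hK : K.IsMatching := by
    rintro _ ⟨v, hv, rfl⟩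
    obtain ⟨w, hw, huniq⟩ := h v hv
    have hwX : w ∉ X := fun hwX => hno v hv w hwX hw
    have hwc : ⟨w, hwX⟩ ∈ c.supp := c.mem_supp_of_adj_mem_supp hv (hN hw)
    exact ⟨w, ⟨⟨v, hv, rfl⟩, ⟨_, hwc, rfl⟩, hw⟩, fun w' hw' => huniq w' hw'.2.2⟩
  have := Fintype.ofFinite K.verts
  have heven := hK.even_card
  rw [← Set.ncard_eq_toFinset_card', Subgraph.induce_verts,
    Set.ncard_image_of_injective _ Subtype.val_injective] at heven
  exact Nat.not_even_iff_odd.mpr hc heven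

theorem qG_lt_ncard [Finite V] {X : Set V} {N : SimpleGraph V} (hN : N ≤ G) {x : V}
    (hx : x ∈ X) (hxN : ∀ w, ¬ N.Adj x w) (h : ∀ z ∈ X ∪ DX G X, z ≠ x → ∃! w, N.Adj z w) :
    qG G X < X.ncard := by
  have hescape (c : (G.induce Xᶜ).ConnectedComponent) :
      ∃ w, Odd c.supp.ncard → w ∈ X ∧ ∃ v ∈ c.supp, N.Adj v w := by
    by_cases hc : Odd c.supp.ncard
    · obtain ⟨v, hv, w, hwX, hvw⟩ := exists_adj_mem_of_odd_ncard_supp hN hc fun v hv =>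
        h v (Or.inr ⟨v.2, (c.mem_supp_iff v).mp hv ▸ hc⟩) fun hvx => v.2 (hvx ▸ hx)
      exact ⟨w, fun _ => ⟨hwX, v, hv, hvw⟩⟩
    · exact ⟨x, fun hc' => absurd hc' hc⟩
  choose f hf using hescape
  have hfx {c} (hc : Odd c.supp.ncard) : f c ≠ x := by
    obtain ⟨-, v, -, hv⟩ := hf c hc
    exact fun hfc => hxN v (hfc ▸ hv.symm)
  have hinj : Set.InjOn f {c | Odd c.supp.ncard} := by
    intro c₁ hc₁ c₂ hc₂ hf₁₂
    obtain ⟨hX₁, v₁, hv₁, hN₁⟩ := hf c₁ hc₁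
    obtain ⟨-, v₂, hv₂, hN₂⟩ := hf c₂ hc₂
    obtain ⟨_, -, huniq⟩ := h (f c₁) (Or.inl hX₁) (hfx hc₁)
    have hv : v₁ = v₂ := Subtype.ext <| (huniq _ hN₁.symm).trans (huniq _ (hf₁₂ ▸ hN₂.symm)).symm
    rw [← (c₁.mem_supp_iff v₁).mp hv₁, ← (c₂.mem_supp_iff v₂).mp hv₂, hv]
  calc qG G X ≤ (X \ {x}).ncard :=
        Set.ncard_le_ncard_of_injOn f (fun c hc => ⟨(hf c hc).1, hfx hc⟩) hinj (Set.toFinite _)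
    _ < X.ncard := Set.ncard_sdiff_singleton_lt_of_mem hx (Set.toFinite X)

section AlternatingPath

variable {M : G.Subgraph} {u v : V} {p : G.Walk u v}

lemma neighborSet_symmDiff_toSubgraph_start (hM : M.IsPerfectMatching) (hp : p.IsPath)
    (halt : IsAltList M.edgeSet p.edges) (hnil : ¬ p.Nil) :
    (M.spanningCoe ∆ p.toSubgraph.spanningCoe).neighborSet u = ∅ := by
  have hsnd : M.Adj u p.snd := by
    simpa using halt.adj_getVert_iff (i := 0) (p.not_nil_iff_lt_length.mp hnil)
  rw [neighborSet_symmDiff, Subgraph.neighborSet_spanningCoe, Subgraph.neighborSet_spanningCoe,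
    hM.1.neighborSet_eq hsnd, hp.neighborSet_toSubgraph_startpoint hnil, symmDiff_self]
  rfl

lemma exists_neighborSet_symmDiff_toSubgraph_getVert (hM : M.IsPerfectMatching) (hp : p.IsPath)
    (halt : IsAltList M.edgeSet p.edges) {i : ℕ} (hi₀ : i ≠ 0) (hi : i < p.length) :
    ∃ w, (M.spanningCoe ∆ p.toSubgraph.spanningCoe).neighborSet (p.getVert i) = {w} := by
  have hne : p.getVert (i - 1) ≠ p.getVert (i + 1) := fun h => by
    have := hp.getVert_injOn (by rw [Set.mem_ofPred_eq]; lia) (by rw [Set.mem_ofPred_eq]; lia) h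
    lia
  rw [neighborSet_symmDiff, Subgraph.neighborSet_spanningCoe, Subgraph.neighborSet_spanningCoe,
    hp.neighborSet_toSubgraph_internal hi₀ hi]
  rcases Nat.even_or_odd i with hev | hodd
  · rw [hM.1.neighborSet_eq ((halt.adj_getVert_iff hi).mpr hev)]
    refine ⟨p.getVert (i - 1), ?_⟩
    ext; simp only [Set.mem_symmDiff, Set.mem_insert_iff, Set.mem_singleton_iff]; grind
  · have hprev := (halt.adj_getVert_iff (i := i - 1) (by lia)).mpr
      (Nat.Odd.sub_odd hodd odd_one)
    rw [Nat.sub_add_cancel (by lia)] at hprev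
    rw [hM.1.neighborSet_eq hprev.symm]
    refine ⟨p.getVert (i + 1), ?_⟩
    ext; simp only [Set.mem_symmDiff, Set.mem_insert_iff, Set.mem_singleton_iff]; grind

lemma existsUnique_adj_symmDiff_toSubgraph (hM : M.IsPerfectMatching) (hp : p.IsPath)
    (halt : IsAltList M.edgeSet p.edges) {z : V} (hzu : z ≠ u) (hzv : z ≠ v) :
    ∃! w, (M.spanningCoe ∆ p.toSubgraph.spanningCoe).Adj z w := by
  by_cases hz : z ∈ p.support
  · obtain ⟨i, rfl, hi⟩ := Walk.mem_support_iff_exists_getVert.mp hz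
    have hi₀ : i ≠ 0 := by rintro rfl; exact hzu p.getVert_zero
    have hil : i < p.length := hi.lt_of_ne (by rintro rfl; exact hzv p.getVert_length)
    obtain ⟨w, hw⟩ := exists_neighborSet_symmDiff_toSubgraph_getVert hM hp halt hi₀ hil
    exact existsUnique_adj_of_neighborSet_eq_singleton hw
  · obtain ⟨w, hzw, -⟩ := hM.1 (hM.2 z)
    have hpz : p.toSubgraph.neighborSet z = ∅ :=
      Set.eq_empty_of_forall_notMem fun w' hw' =>
        hz (p.mem_verts_toSubgraph.mp (p.toSubgraph.edge_vert hw'))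
    refine existsUnique_adj_of_neighborSet_eq_singleton (w := w) ?_
    rw [neighborSet_symmDiff, Subgraph.neighborSet_spanningCoe, Subgraph.neighborSet_spanningCoe,
      hM.1.neighborSet_eq hzw, hpz]
    exact symmDiff_bot _

end AlternatingPath

theorem not_isAltList_of_isBarrier [Finite V] {M : G.Subgraph} (hM : M.IsPerfectMatching)
    {X : Set V} (hX : IsBarrier G X) {x y : V} (hx : x ∈ X) (hy : y ∈ CX G X)
    {p : G.Walk x y} (hp : p.IsPath) : ¬ IsAltList M.edgeSet p.edges := by
  intro halt
  have hnil : ¬ p.Nil := fun hnil => hy (Or.inl (hnil.eq ▸ hx))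
  have hle : M.spanningCoe ∆ p.toSubgraph.spanningCoe ≤ G :=
    symmDiff_le_sup.trans (sup_le M.spanningCoe_le p.toSubgraph.spanningCoe_le)
  refine (qG_lt_ncard hle hx (fun w hw => ?_) fun z hz hzx => ?_).ne hX
  · exact (neighborSet_symmDiff_toSubgraph_start hM hp halt hnil).subset hw
  · exact existsUnique_adj_symmDiff_toSubgraph hM hp halt hzx fun hzy => hy (hzy ▸ hz)

end SimpleGraph

theorem stmt16 {V : Type*} [Fintype V] (G : SimpleGraph V)
    (M : SimpleGraph.Subgraph G) (hM : M.IsPerfectMatching)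
    (X : Set V) (hX : IsBarrier G X)
    (x y : V) (hx : x ∈ X) (hy : y ∈ CX G X) :
    (∀ p : G.Walk x y, ¬ IsSaturatedPath M.edgeSet p) ∧
    (∀ p : G.Walk x y, ¬ IsBalancedPath M.edgeSet p) :=
  ⟨fun _ hp => not_isAltList_of_isBarrier hM hX hx hy hp.1 hp.2.2,
    fun _ hp => not_isAltList_of_isBarrier hM hX hx hy hp.1 hp.2.2⟩
end

section
/- Let G be a factorizable graph, M a perfect matching of G, and X ⊆ V(G) an odd-maximal barrier of G. Then for any u ∈ X and v ∈ X ∪ C_X, there is no M-saturated path between u and v. -/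
open SimpleGraph

/-!
Flipping `M` along an `M`-saturated path from `u` to `v` yields a matching `M'` that misses
exactly `u` and `v`. An odd component of `G - X` contains neither `u ∈ X` nor `v ∉ D_X`, so it is
covered by `M'` and, having odd size, has a vertex matched by `M'` into `X`. Distinct odd
components get distinct partners, none of which is the exposed vertex `u`; hence
`q_G(X) ≤ |X| - 1`, contradicting `q_G(X) = |X|`.
-/

namespace SimpleGraph.Subgraph

variable {V : Type*} {G : SimpleGraph V} {M : G.Subgraph}

lemma IsMatching.deleteVerts_of_adj {u v : V} (hM : M.IsMatching) (huv : M.Adj u v) :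
    (M.deleteVerts {u, v}).IsMatching := by
  rintro x ⟨hx, hxuv⟩
  obtain ⟨y, hxy, huniq⟩ := hM hx
  have hyuv : y ∉ ({u, v} : Set V) := by
    rintro (rfl | rfl)
    · exact hxuv (.inr (hM.eq_of_adj_right hxy huv.symm))
    · exact hxuv (.inl (hM.eq_of_adj_right hxy huv))
  exact ⟨y, deleteVerts_adj.mpr ⟨hx, hxuv, hxy.snd_mem, hyuv, hxy⟩,
    fun z hz => huniq z (deleteVerts_adj.mp hz).2.2.2.2⟩

lemma IsMatching.deleteVerts_adj_iff_of_adj {u v x y : V} (hM : M.IsMatching)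
    (huv : M.Adj u v) (hxu : x ≠ u) (hxv : x ≠ v) :
    (M.deleteVerts {u, v}).Adj x y ↔ M.Adj x y := by
  refine ⟨fun h => (deleteVerts_adj.mp h).2.2.2.2, fun hxy => ?_⟩
  refine deleteVerts_adj.mpr ⟨hxy.fst_mem, by simp [hxu, hxv], hxy.snd_mem, ?_, hxy⟩
  rintro (rfl | rfl)
  · exact hxv (hM.eq_of_adj_left hxy.symm huv)
  · exact hxu (hM.eq_of_adj_right hxy huv)

lemma IsMatching.exists_exchange {u a b : V} (hM : M.IsMatching) (hua : M.Adj u a)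
    (hb : b ∉ M.verts) (hab : G.Adj a b) :
    ∃ M' : G.Subgraph, M'.IsMatching ∧ M'.verts = insert b (M.verts \ {u}) ∧
      ∀ x, x ≠ u → x ≠ a → x ≠ b → ∀ y, (M'.Adj x y ↔ M.Adj x y) := by
  refine ⟨M.deleteVerts {u, a} ⊔ G.subgraphOfAdj hab, ?_, ?_, ?_⟩
  · refine (hM.deleteVerts_of_adj hua).sup (.subgraphOfAdj hab) ?_
    rw [(hM.deleteVerts_of_adj hua).support_eq_verts,
      IsMatching.support_eq_verts (.subgraphOfAdj hab), Set.disjoint_left]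
    rintro x ⟨hx, hxua⟩ (rfl | rfl)
    · exact hxua (.inr rfl)
    · exact hb hx
  · ext x
    simp only [verts_sup, deleteVerts_verts, subgraphOfAdj_verts]
    grind [hua.snd_mem, hua.ne]
  · intro x hxu hxa hxb y
    rw [sup_adj, hM.deleteVerts_adj_iff_of_adj hua hxu hxa, subgraphOfAdj_adj, Sym2.eq_iff]
    grind

lemma IsMatching.even_ncard_verts (hM : M.IsMatching) : Even M.verts.ncard := by
  rcases M.verts.finite_or_infinite with hfin | hinf
  · have := hfin.fintype
    simpa only [Set.ncard_eq_toFinset_card'] using hM.even_card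
  · simp [hinf.ncard]

lemma IsMatching.exists_adj_of_odd_supp (hM : M.IsMatching) {X : Set V}
    {c : (G.induce Xᶜ).ConnectedComponent} (hc : Odd c.supp.ncard)
    (hcov : ∀ x ∈ c.supp, x.1 ∈ M.verts) : ∃ y ∈ X, ∃ x ∈ c.supp, M.Adj x y := by
  by_contra! hX
  have hclosed : ∀ x ∈ c.supp, ∀ y, M.Adj x y → ∃ hy : y ∈ Xᶜ, ⟨y, hy⟩ ∈ c.supp := by
    intro x hx y hxy
    have hy : y ∈ Xᶜ := fun hy => hX y hy x hx hxy
    exact ⟨hy, c.mem_supp_of_adj_mem_supp hx (by simpa using hxy.adj_sub)⟩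
  have hmatch : (M.induce (Subtype.val '' c.supp)).IsMatching := by
    rintro _ ⟨x, hx, rfl⟩
    obtain ⟨y, hxy, huniq⟩ := hM (hcov x hx)
    obtain ⟨hy, hyc⟩ := hclosed x hx y hxy
    exact ⟨y, ⟨⟨x, hx, rfl⟩, ⟨⟨y, hy⟩, hyc, rfl⟩, hxy⟩, fun z hz => huniq z hz.2.2⟩
  have := hmatch.even_ncard_verts
  rw [induce_verts, Set.ncard_image_of_injective _ Subtype.val_injective] at this
  exact Nat.not_even_iff_odd.mpr hc this

lemma IsMatching.qG_le_ncard_inter_verts_s17 [Finite V] (hM : M.IsMatching) {X : Set V}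
    (hcov : DX G X ⊆ M.verts) : qG G X ≤ (X ∩ M.verts).ncard := by
  have hodd : ∀ c : (G.induce Xᶜ).ConnectedComponent, Odd c.supp.ncard →
      ∃ y ∈ X, ∃ x ∈ c.supp, M.Adj x y := by
    intro c hc
    refine hM.exists_adj_of_odd_supp hc fun x hx => hcov ⟨x.2, ?_⟩
    rwa [(c.mem_supp_iff x).mp hx]
  rcases isEmpty_or_nonempty V with _ | _
  · simp [qG, Set.eq_empty_of_isEmpty]
  choose! f hfX hf using hodd
  refine Set.ncard_le_ncard_of_injOn f
    (fun c hc => ⟨hfX c hc, (hf c hc).elim fun _ hx => hx.2.snd_mem⟩) ?_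
  intro c₁ hc₁ c₂ hc₂ hf₁₂
  obtain ⟨x₁, hx₁, hadj₁⟩ := hf c₁ hc₁
  obtain ⟨x₂, hx₂, hadj₂⟩ := hf c₂ hc₂
  have hx : x₁ = x₂ := Subtype.ext (hM.eq_of_adj_right hadj₁ (hf₁₂ ▸ hadj₂))
  rw [← (c₁.mem_supp_iff _).mp hx₁, ← (c₂.mem_supp_iff _).mp hx₂, hx]

end SimpleGraph.Subgraph

section SaturatedPaths

variable {V : Type*} {G : SimpleGraph V} {M : G.Subgraph}

lemma isAltList_cons_cons {F : Set (Sym2 V)} {e e' : Sym2 V} {l : List (Sym2 V)} :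
    IsAltList F (e :: e' :: l) ↔ (e ∈ F ∧ e' ∉ F) ∧ IsAltList F l := by
  constructor
  · intro h
    refine ⟨⟨by simpa using h 0 (by simp), by simpa using h 1 (by simp)⟩, fun i hi => ?_⟩
    simpa [Nat.even_add] using h (i + 2) (by simpa using hi)
  · rintro ⟨⟨he, he'⟩, hl⟩ (_ | _ | i) hi
    · simpa using he
    · simpa using he'
    · simpa [Nat.even_add] using hl i (by simpa using hi)

lemma IsSaturatedPath.adj_snd {u v : V} {p : G.Walk u v} (hp : IsSaturatedPath M.edgeSet p) :
    M.Adj u p.snd := by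
  cases p with
  | nil => simp [IsSaturatedPath] at hp
  | cons h q => simpa using hp.2.2 0 (by simp)

/-- `M'` is the symmetric difference of `M` and the edges of `p`. -/
theorem IsSaturatedPath.exists_isMatching {u v : V} {p : G.Walk u v}
    (hp : IsSaturatedPath M.edgeSet p) (hM : M.IsMatching) :
    ∃ M' : G.Subgraph, M'.IsMatching ∧ M'.verts = M.verts \ {u, v} ∧
      ∀ x ∉ p.support, ∀ y, (M'.Adj x y ↔ M.Adj x y) :=
  match p, hp with
  | .nil, hp => by simp [IsSaturatedPath] at hp
  | .cons h .nil, hp => by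
    have huv : M.Adj u v := by simpa using hp.adj_snd
    refine ⟨M.deleteVerts {u, v}, hM.deleteVerts_of_adj huv, rfl, fun x hx y => ?_⟩
    simp only [Walk.support_cons, Walk.support_nil, List.mem_cons, List.not_mem_nil,
      or_false, not_or] at hx
    exact hM.deleteVerts_adj_iff_of_adj huv hx.1 hx.2
  | .cons (v := a) hua (.cons (v := b) hab r), ⟨hp, hodd, halt⟩ => by
    rw [Walk.edges_cons, Walk.edges_cons, isAltList_cons_cons] at halt
    obtain ⟨⟨hMua, -⟩, halt⟩ := halt
    have hr : IsSaturatedPath M.edgeSet r :=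
      ⟨hp.of_cons.of_cons, by simpa [Nat.odd_add] using hodd, halt⟩
    obtain ⟨Mr, hMr, hMr_verts, hMr_adj⟩ := hr.exists_isMatching hM
    have hsupp := hp.support_nodup
    simp only [Walk.support_cons, List.nodup_cons, List.mem_cons, not_or] at hsupp
    have hb : b ∈ M.verts := hr.adj_snd.fst_mem
    have hbv : b ≠ v := by
      rintro rfl
      simp [(Walk.isPath_iff_nil.mp hr.1).eq_nil, Nat.odd_iff] at hodd
    obtain ⟨M', hM', hM'_verts, hM'_adj⟩ := hMr.exists_exchange
      ((hMr_adj u hsupp.1.2 a).mpr hMua) (by simp [hMr_verts]) hab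
    refine ⟨M', hM', ?_, fun x hx y => ?_⟩
    · rw [hM'_verts, hMr_verts]
      have hbu : b ≠ u := fun h => hsupp.1.2 (h ▸ r.start_mem_support)
      ext x
      simp only [Set.mem_insert_iff, Set.mem_sdiff, Set.mem_singleton_iff]
      grind
    · simp only [Walk.support_cons, List.mem_cons, not_or] at hx
      rw [hM'_adj x hx.1 hx.2.1 (fun h => hx.2.2 (h ▸ r.start_mem_support)), hMr_adj x hx.2.2]

end SaturatedPaths

theorem stmt17 {V : Type*} [Fintype V] (G : SimpleGraph V)
    (M : SimpleGraph.Subgraph G) (hM : M.IsPerfectMatching)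
    (X : Set V) (hX : IsOddMaximalBarrier G X)
    (u v : V) (hu : u ∈ X) (hv : v ∈ X ∪ CX G X) :
    ∀ p : G.Walk u v, ¬ IsSaturatedPath M.edgeSet p := by
  intro p hp
  obtain ⟨M', hM', hM'_verts, -⟩ := hp.exists_isMatching hM.1
  have hcov : DX G X ⊆ M'.verts := by
    intro x hx
    rw [hM'_verts, hM.2.verts_eq_univ]
    refine ⟨trivial, ?_⟩
    rintro (rfl | rfl)
    · exact hx.1 hu
    · rcases hv with hvX | hvC
      exacts [hx.1 hvX, hvC (.inr hx)]
  have hsub : X ∩ M'.verts ⊆ X \ {u} := fun x hx =>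
    ⟨hx.1, fun hxu => (hM'_verts ▸ hx.2).2 (.inl hxu)⟩
  have hlt : (X ∩ M'.verts).ncard < X.ncard :=
    (Set.ncard_le_ncard hsub).trans_lt (Set.ncard_sdiff_singleton_lt_of_mem hu)
  exact (hM'.qG_le_ncard_inter_verts_s17 hcov).not_gt ((hX.1 : qG G X = X.ncard) ▸ hlt)
end
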